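/- Let G be a directed graph with unique source s and unique sink t, every vertex lying on an s-t path. If a sequence X of vertices is NOT a subsequence of ext(v) for any vertex v in a given set C ⊆ V, then there exists a C-walk cover of G in which no walk contains X as a subsequence; hence X is not C-safe. -/

import Mathlib

/-!
If every `s`-`v` walk contains `Y` as a subsequence, then every element of `Y` s-dominates `v`,
and whenever `a` precedes `b` in `Y`, `a` s-dominates `b`: otherwise a path to `b` avoiding `a`,
continued along a path from `b` to `v`, would be a walk missing the pair. Since s-dominance is
a partial order on reachable vertices, `Y` is then a subsequence of the s-dominator chain of `v`;
reversing the edges gives the same for `v`-`t` walks and the t-dominator chain. Now if `X` is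
not a subsequence of `ext(v)`, split it after the longest prefix that embeds into the
s-dominator chain: the two parts are avoided by an `s`-`v` walk and a `v`-`t` walk respectively,
and their concatenation is an `s`-`t` walk through `v` avoiding `X`.
-/

namespace FD

variable {V : Type*}

def IsWalk (E : V → V → Prop) (l : List V) : Prop := l ≠ [] ∧ l.Chain' E

def IsWalkFromTo (E : V → V → Prop) (s t : V) (l : List V) : Prop :=
  IsWalk E l ∧ l.head? = some s ∧ l.getLast? = some t

def IsPathFromTo (E : V → V → Prop) (s t : V) (l : List V) : Prop :=
  IsWalkFromTo E s t l ∧ l.Nodup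

def UniqueSource (E : V → V → Prop) (s : V) : Prop := ∀ v, (¬ ∃ u, E u v) ↔ v = s

def UniqueSink (E : V → V → Prop) (t : V) : Prop := ∀ v, (¬ ∃ w, E v w) ↔ v = t

def SDom (E : V → V → Prop) (s u v : V) : Prop := ∀ p, IsPathFromTo E s v p → u ∈ p

def TDom (E : V → V → Prop) (t u v : V) : Prop := ∀ p, IsPathFromTo E v t p → u ∈ p

def IsSDomChain (E : V → V → Prop) (s v : V) (l : List V) : Prop :=
  l.Nodup ∧ (∀ u, u ∈ l ↔ SDom E s u v) ∧
    l.Chain' (fun a b => SDom E s a b) ∧ l.head? = some s ∧ l.getLast? = some v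

def IsTDomChain (E : V → V → Prop) (t v : V) (l : List V) : Prop :=
  l.Nodup ∧ (∀ u, u ∈ l ↔ TDom E t u v) ∧
    l.Chain' (fun a b => TDom E t b a) ∧ l.head? = some v ∧ l.getLast? = some t

/-- `x = ext(v)`; the vertex `v`, which ends `ds` and starts `dt`, occurs once. -/
def IsExtension (E : V → V → Prop) (s t v : V) (x : List V) : Prop :=
  ∃ ds dt, IsSDomChain E s v ds ∧ IsTDomChain E t v dt ∧ x = ds ++ dt.tail

def WalkCover (E : V → V → Prop) (s t : V) (C : Set V) (P : Set (List V)) : Prop :=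
  (∀ w ∈ P, IsWalkFromTo E s t w) ∧ ∀ c ∈ C, ∃ w ∈ P, c ∈ w

def SafeSeq (E : V → V → Prop) (s t : V) (C : Set V) (X : List V) : Prop :=
  ∀ P, WalkCover E s t C P → ∃ w ∈ P, X.Sublist w

def walkEdges (l : List V) : List (V × V) := l.zip l.tail

/-- `idoms` is the parent function of the s-dominator tree (immediate s-dominators). -/
def IsIdomS (E : V → V → Prop) (s : V) (idoms : V → V) : Prop :=
  idoms s = s ∧ ∀ v, v ≠ s → idoms v ≠ v ∧ SDom E s (idoms v) v ∧
    ∀ u, u ≠ v → SDom E s u v → SDom E s u (idoms v)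

def IsIdomT (E : V → V → Prop) (t : V) (idomt : V → V) : Prop :=
  idomt t = t ∧ ∀ v, v ≠ t → idomt v ≠ v ∧ TDom E t (idomt v) v ∧
    ∀ u, u ≠ v → TDom E t u v → TDom E t u (idomt v)

def UniqueChild (par : V → V) (root c p : V) : Prop :=
  c ≠ root ∧ par c = p ∧ ∀ y, y ≠ root → par y = p → y = c

/-- A univocal path `v₁ … v_k`: in the t-dominator tree each `v_{i+1}` has `v_i`
as its unique child, and `v_k … v_1` is a path in the s-dominator tree where each
vertex but the deepest (`v_k`) has exactly one child. -/
def IsUnivocal (idoms idomt : V → V) (s t : V) (l : List V) : Prop :=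
  l ≠ [] ∧ l.Chain' (fun a b => UniqueChild idomt t a b ∧ UniqueChild idoms s b a)

def IsMaximalUnivocal (idoms idomt : V → V) (s t : V) (l : List V) : Prop :=
  IsUnivocal idoms idomt s t l ∧
    ∀ l', IsUnivocal idoms idomt s t l' → l <:+: l' → l' = l

def MaximalSafe (E : V → V → Prop) (s t : V) (X : List V) : Prop :=
  SafeSeq E s t Set.univ X ∧ ∀ Y, X.Sublist Y → Y ≠ X → ¬ SafeSeq E s t Set.univ Y

def EReach (E : V → V → Prop) (e e' : V × V) : Prop := Relation.ReflTransGen E e.2 e'.1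

def EdgeWalkCover (E : V → V → Prop) (s t : V) (C : Set (V × V)) (P : Set (List V)) : Prop :=
  (∀ w ∈ P, IsWalkFromTo E s t w) ∧ ∀ c ∈ C, ∃ w ∈ P, c ∈ walkEdges w

def SafeEdgeSeq (E : V → V → Prop) (s t : V) (C : Set (V × V)) (S : List (V × V)) : Prop :=
  ∀ P, EdgeWalkCover E s t C P → ∃ w ∈ P, S.Sublist (walkEdges w)

end FD

open scoped List

namespace List

variable {α : Type*}

theorem not_sublist_append_iff {X A B : List α} :
    ¬ X <+ A ++ B ↔ ∃ n, ¬ X.take (n + 1) <+ A ∧ ¬ X.drop n <+ B := by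
  classical
  constructor
  · intro h
    set n := Nat.findGreatest (fun n => X.take n <+ A) X.length
    have hn : X.take n <+ A :=
      Nat.findGreatest_spec (P := fun n => X.take n <+ A) (Nat.zero_le _) (by simp)
    have hnX : n < X.length := by
      by_contra! hle
      exact h ((take_of_length_le hle ▸ hn).trans (sublist_append_left A B))
    refine ⟨n, Nat.findGreatest_is_greatest (Nat.lt_succ_self n) hnX, fun hB => h ?_⟩
    simpa using hn.append hB
  · rintro ⟨n, hA, hB⟩ hX
    obtain ⟨X₁, X₂, rfl, h₁, h₂⟩ := sublist_append_iff.1 hX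
    by_cases hlen : n + 1 ≤ X₁.length
    · rw [take_append_of_le_length hlen] at hA
      exact hA ((take_sublist _ _).trans h₁)
    · rw [drop_append, drop_eq_nil_of_le (by omega), nil_append] at hB
      exact hB ((drop_sublist _ _).trans h₂)

end List

namespace FD

variable {V : Type*}

section

variable {E : V → V → Prop} {u v w : V}

theorem IsWalkFromTo.append {m : V} {w₁ w₂ : List V} (h₁ : IsWalkFromTo E u m w₁)
    (h₂ : IsWalkFromTo E m v (m :: w₂)) : IsWalkFromTo E u v (w₁ ++ w₂) := by
  obtain ⟨⟨hne₁, hc₁⟩, hh₁, hl₁⟩ := h₁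
  obtain ⟨⟨-, hc₂⟩, -, hl₂⟩ := h₂
  refine ⟨⟨by simp [hne₁], List.isChain_append.2 ⟨hc₁, hc₂.tail, ?_⟩⟩, by simp [hh₁], ?_⟩
  · rw [hl₁]
    rintro _ ⟨⟩ y hy
    exact (List.isChain_cons.1 hc₂).1 y hy
  · cases w₂ <;> simp_all [List.getLast?_append]

theorem IsWalkFromTo.reverse {l : List V} (h : IsWalkFromTo E u v l) :
    IsWalkFromTo (flip E) v u l.reverse := by
  obtain ⟨⟨hne, hc⟩, hh, hl⟩ := h
  exact ⟨⟨by simpa using hne, List.isChain_reverse.2 hc⟩, by simpa using hl, by simpa using hh⟩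

theorem IsPathFromTo.reverse {l : List V} (h : IsPathFromTo E u v l) :
    IsPathFromTo (flip E) v u l.reverse :=
  ⟨h.1.reverse, List.nodup_reverse.2 h.2⟩

theorem IsPathFromTo.split {l₁ l₂ : List V} (h : IsPathFromTo E u w (l₁ ++ v :: l₂)) :
    IsPathFromTo E u v (l₁ ++ [v]) ∧ IsPathFromTo E v w (v :: l₂) := by
  obtain ⟨⟨⟨-, hc⟩, hh, hl⟩, hnd⟩ := h
  have hpre : l₁ ++ [v] <+: l₁ ++ v :: l₂ := ⟨l₂, by simp⟩
  have hsuf : v :: l₂ <:+ l₁ ++ v :: l₂ := List.suffix_append _ _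
  refine ⟨⟨⟨⟨by simp, hc.infix hpre.isInfix⟩, ?_, by simp⟩, hnd.sublist hpre.sublist⟩,
    ⟨⟨⟨by simp, hc.infix hsuf.isInfix⟩, rfl, by rwa [List.getLast?_append_cons] at hl⟩,
      hnd.sublist hsuf.sublist⟩⟩
  cases l₁ <;> simpa using hh

theorem sDom_trans {s a b c : V} (hab : SDom E s a b) (hbc : SDom E s b c) : SDom E s a c := by
  intro p hp
  obtain ⟨l₁, l₂, rfl⟩ := List.append_of_mem (hbc p hp)
  have ha := hab _ hp.split.1
  simp only [List.mem_append, List.mem_cons] at ha ⊢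
  tauto

theorem sDom_antisymm {s a b : V} (hb : ∃ p, IsPathFromTo E s b p) (hab : SDom E s a b)
    (hba : SDom E s b a) : a = b := by
  obtain ⟨p, hp⟩ := hb
  obtain ⟨l₁, l₂, rfl⟩ := List.append_of_mem (hab p hp)
  by_contra hne
  have hbl₁ : b ∈ l₁ := by simpa [Ne.symm hne] using hba _ hp.split.1
  have hbl₂ : b ∈ a :: l₂ :=
    List.mem_of_getLast? (by simpa [List.getLast?_append_cons] using hp.1.2.2)
  exact (List.nodup_append.1 hp.2).2.2 b hbl₁ b hbl₂ rfl

theorem tDom_iff_sDom_flip {t a b : V} : TDom E t a b ↔ SDom (flip E) t a b :=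
  ⟨fun h p hp => by simpa using h _ hp.reverse, fun h p hp => by simpa using h _ hp.reverse⟩

theorem IsTDomChain.reverse {t : V} {l : List V} (h : IsTDomChain E t v l) :
    IsSDomChain (flip E) t v l.reverse := by
  obtain ⟨hnd, hmem, hc, hh, hl⟩ := h
  refine ⟨List.nodup_reverse.2 hnd, fun a => by simp [hmem, tDom_iff_sDom_flip],
    List.isChain_reverse.2 (hc.imp fun {_ _} h => tDom_iff_sDom_flip.1 h), by simpa using hl,
    by simpa using hh⟩

theorem IsSDomChain.sublist_of_forall_walk {s : V} {ds Y : List V}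
    (hreach : ∀ a, ∃ p, IsPathFromTo E s a p) (hds : IsSDomChain E s v ds)
    (hY : ∀ w, IsWalkFromTo E s v w → Y <+ w) : Y <+ ds := by
  obtain ⟨-, hmem, hchain, -, -⟩ := hds
  obtain ⟨p, hp⟩ := hreach v
  have hdom : ∀ y ∈ Y, SDom E s y v := fun y hy q hq => (hY q hq.1).subset hy
  have hpair : Y.Pairwise (SDom E s) := by
    refine List.pairwise_iff_forall_sublist.2 fun {a b} hab q hq => ?_
    by_contra haq
    obtain ⟨l₁, l₂, rfl⟩ := List.append_of_mem (hdom b (hab.subset (by simp)) p hp)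
    have hr := hp.split.2
    obtain ⟨A, B, hAB, hA, hB⟩ := List.sublist_append_iff.1 (hab.trans (hY _ (hq.1.append hr.1)))
    rcases A with _ | ⟨a', A⟩
    · subst hAB
      exact (List.nodup_cons.1 hr.2).1 (hB.subset (by simp))
    · rw [List.cons_append, List.cons.injEq] at hAB
      exact haq (hAB.1 ▸ hA.subset List.mem_cons_self)
  have : Std.Antisymm (SDom E s) := ⟨fun a b hab hba => sDom_antisymm (hreach b) hab hba⟩
  have : Trans (SDom E s) (SDom E s) (SDom E s) := ⟨sDom_trans⟩
  exact List.sublist_of_subperm_of_pairwise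
    (List.subperm_of_subset ((hY p hp.1).nodup hp.2) fun y hy => (hmem y).2 (hdom y hy))
    hpair (List.isChain_iff_pairwise.1 hchain)

theorem IsTDomChain.sublist_of_forall_walk {t : V} {dt Y : List V}
    (hreach : ∀ a, ∃ p, IsPathFromTo E a t p) (hdt : IsTDomChain E t v dt)
    (hY : ∀ w, IsWalkFromTo E v t w → Y <+ w) : Y <+ dt := by
  have := hdt.reverse.sublist_of_forall_walk (Y := Y.reverse)
    (fun a => let ⟨p, hp⟩ := hreach a; ⟨p.reverse, hp.reverse⟩) fun w hw => by
      simpa using List.reverse_sublist.2 (hY _ (hw.reverse : IsWalkFromTo E v t w.reverse))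
  simpa using this

theorem exists_path_from_source {s t : V} (hall : ∀ a, ∃ p, IsPathFromTo E s t p ∧ a ∈ p)
    (a : V) : ∃ p, IsPathFromTo E s a p := by
  obtain ⟨p, hp, ha⟩ := hall a
  obtain ⟨l₁, l₂, rfl⟩ := List.append_of_mem ha
  exact ⟨_, hp.split.1⟩

theorem exists_path_to_sink {s t : V} (hall : ∀ a, ∃ p, IsPathFromTo E s t p ∧ a ∈ p)
    (a : V) : ∃ p, IsPathFromTo E a t p := by
  obtain ⟨p, hp, ha⟩ := hall a
  obtain ⟨l₁, l₂, rfl⟩ := List.append_of_mem ha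
  exact ⟨_, hp.split.2⟩

theorem IsExtension.exists_walk_mem_not_sublist {s t : V} {x X : List V}
    (hall : ∀ a, ∃ p, IsPathFromTo E s t p ∧ a ∈ p) (hx : IsExtension E s t v x)
    (hX : ¬ X <+ x) : ∃ w, IsWalkFromTo E s t w ∧ v ∈ w ∧ ¬ X <+ w := by
  obtain ⟨ds, dt, hds, hdt, rfl⟩ := hx
  obtain ⟨dt, rfl⟩ := List.head?_eq_some_iff.1 hdt.2.2.2.1
  obtain ⟨n, hn₁, hn₂⟩ := List.not_sublist_append_iff.1 hX
  obtain ⟨w₁, hw₁, hw₁X⟩ : ∃ w, IsWalkFromTo E s v w ∧ ¬ X.take (n + 1) <+ w := by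
    by_contra! h
    exact hn₁ (hds.sublist_of_forall_walk (exists_path_from_source hall) h)
  obtain ⟨w₂, hw₂, hw₂X⟩ : ∃ w, IsWalkFromTo E v t w ∧ ¬ v :: X.drop n <+ w := by
    by_contra! h
    exact hn₂ (List.cons_sublist_cons.1 (hdt.sublist_of_forall_walk (exists_path_to_sink hall) h))
  obtain ⟨w₂, rfl⟩ := List.head?_eq_some_iff.1 hw₂.2.1
  exact ⟨w₁ ++ w₂, hw₁.append hw₂, List.mem_append_left _ (List.mem_of_getLast? hw₁.2.2),
    List.not_sublist_append_iff.2 ⟨n, hw₁X, fun h => hw₂X (h.cons_cons v)⟩⟩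

end

theorem stmt11_general {V : Type*} (E : V → V → Prop) (s t : V)
    (hall : ∀ a : V, ∃ p, IsPathFromTo E s t p ∧ a ∈ p)
    (C : Set V) (ext : V → List V) (hext : ∀ a, IsExtension E s t a (ext a))
    (X : List V) (hX : ¬ ∃ v ∈ C, X.Sublist (ext v)) :
    (∃ P, WalkCover E s t C P ∧ ∀ w ∈ P, ¬ X.Sublist w) ∧ ¬ SafeSeq E s t C X := by
  have hcover : ∃ P, WalkCover E s t C P ∧ ∀ w ∈ P, ¬ X.Sublist w := by
    refine ⟨{w | IsWalkFromTo E s t w ∧ ¬ X.Sublist w}, ⟨fun w hw => hw.1, fun v hv => ?_⟩,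
      fun w hw => hw.2⟩
    obtain ⟨w, hw, hvw, hXw⟩ :=
      (hext v).exists_walk_mem_not_sublist hall fun h => hX ⟨v, hv, h⟩
    exact ⟨w, ⟨hw, hXw⟩, hvw⟩
  refine ⟨hcover, fun hsafe => ?_⟩
  obtain ⟨P, hP, hPX⟩ := hcover
  obtain ⟨w, hw, hXw⟩ := hsafe P hP
  exact hPX w hw hXw

/-- if `X` is not a subsequence of `ext v` for any `v ∈ C`, then there is
a `C`-walk cover none of whose walks contains `X` as a subsequence; hence `X` is not
`C`-safe. -/
theorem stmt11 {V : Type*} [Fintype V] (E : V → V → Prop) (s t : V)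
    (hs : UniqueSource E s) (ht : UniqueSink E t)
    (hall : ∀ a : V, ∃ p, IsPathFromTo E s t p ∧ a ∈ p)
    (C : Set V) (ext : V → List V) (hext : ∀ a, IsExtension E s t a (ext a))
    (X : List V) (hX : ¬ ∃ v ∈ C, X.Sublist (ext v)) :
    (∃ P, WalkCover E s t C P ∧ ∀ w ∈ P, ¬ X.Sublist w) ∧ ¬ SafeSeq E s t C X :=
  stmt11_general E s t hall C ext hext X hX

end FD
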